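/- arXiv:0810.2180 — 3 statements merged into one kernel-verified Lean document; each statement's English description precedes it below -/
import Mathlib

section
/- The center of the group G' = G₀(𝔽_p[t,t⁻¹]) is exactly the set of elementary matrices { e₁₅(a) : a ∈ 𝔽_p[t,t⁻¹] }, and the map a ↦ e₁₅(a) is an isomorphism from the additive group of 𝔽_p[t,t⁻¹] onto the center Z(G'). -/
open Matrix LaurentPolynomial

/-- Laurent polynomial ring `𝔽_p[t,t⁻¹]`. -/
abbrev Lp (p : ℕ) : Type := LaurentPolynomial (ZMod p)

/-- The subgroup `G₀(R) ≤ SL₅(R)` of matrices with first column `(1,0,0,0,0)ᵗ`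
and last row `(0,0,0,0,1)`. -/
def G0 (R : Type) [CommRing R] : Subgroup (Matrix.SpecialLinearGroup (Fin 5) R) where
  carrier := {g | (∀ i : Fin 5, g.1 i 0 = if i = 0 then 1 else 0) ∧
                  (∀ j : Fin 5, g.1 4 j = if j = 4 then 1 else 0)}
  one_mem' := by
    constructor <;> intro i <;> simp [Matrix.one_apply, eq_comm]
  mul_mem' := by
    rintro g h ⟨hg1, hg2⟩ ⟨hh1, hh2⟩
    constructor
    · intro i
      have : (g * h).1 i 0 = ∑ k, g.1 i k * h.1 k 0 := by
        rw [Matrix.SpecialLinearGroup.coe_mul, Matrix.mul_apply]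
      rw [this]
      simp only [hh1]
      simp [hg1 i]
    · intro j
      have : (g * h).1 4 j = ∑ k, g.1 4 k * h.1 k j := by
        rw [Matrix.SpecialLinearGroup.coe_mul, Matrix.mul_apply]
      rw [this]
      simp only [hg2]
      simp [hh2 j]
  inv_mem' := by
    rintro g ⟨hg1, hg2⟩
    constructor
    · intro i
      have h1 : (g⁻¹ * g).1 i 0 = ∑ k, (g⁻¹).1 i k * g.1 k 0 := by
        rw [Matrix.SpecialLinearGroup.coe_mul, Matrix.mul_apply]
      have h2 : (g⁻¹ * g).1 i 0 = if i = 0 then 1 else 0 := by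
        rw [inv_mul_cancel]; simp [Matrix.one_apply]
      rw [h1] at h2
      simp only [hg1] at h2
      simpa using h2
    · intro j
      have h1 : (g * g⁻¹).1 4 j = ∑ k, g.1 4 k * (g⁻¹).1 k j := by
        rw [Matrix.SpecialLinearGroup.coe_mul, Matrix.mul_apply]
      have h2 : (g * g⁻¹).1 4 j = if j = 4 then 1 else 0 := by
        rw [mul_inv_cancel]; simp [Matrix.one_apply, eq_comm]
      rw [h1] at h2
      simp only [hg2] at h2
      simpa using h2

/-- The elementary matrix `e₁₅(a) = I + a·E₁₅` as an element of `SL₅(R)`. -/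
def e15SL (R : Type) [CommRing R] (a : R) : Matrix.SpecialLinearGroup (Fin 5) R :=
  ⟨1 + Matrix.single 0 4 a, Matrix.det_transvection_of_ne 0 4 (by decide) a⟩

/-- `e₁₅(a)` as an element of `G₀(R)`. -/
def e15 (R : Type) [CommRing R] (a : R) : G0 R :=
  ⟨e15SL R a, by
    constructor
    · intro i
      simp [e15SL, Matrix.one_apply, Matrix.single, Matrix.add_apply]
    · intro j
      simp [e15SL, Matrix.one_apply, Matrix.single, Matrix.add_apply, eq_comm]⟩

/-!
Indices are 0-based, so the paper's `E₁₅` is `E₀₄` here. A matrix `g ∈ G₀(R)` fixes `e₀` and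
has last row `e₄ᵀ`, so `g E₀₄ = E₀₄ = E₀₄ g`; hence every `e₁₅(a) = 1 + a E₀₄` is central.
Conversely, `G₀(R)` contains the transvections `1 + E_ij` with `i ≠ j`, `i ≠ 4`, `j ≠ 0`, and
commuting with all of them forces every entry of a central element outside the first column,
the last row and the corner `(0,4)` to agree with the identity matrix. Since `a ↦ e₁₅(a)` is an
injective homomorphism, it is an isomorphism onto the centre.
-/

theorem Matrix.eq_one_add_single_of_commute_single {R : Type} [CommRing R]
    {M : Matrix (Fin 5) (Fin 5) R}
    (hcol : ∀ i, M i 0 = if i = 0 then 1 else 0) (hrow : ∀ j, M 4 j = if j = 4 then 1 else 0)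
    (hcomm : ∀ {i j : Fin 5}, i ≠ j → i ≠ 4 → j ≠ 0 → Commute (single i j 1) M) :
    M = 1 + single 0 4 (M 0 4) := by
  ext k l
  by_cases hl : l = 0
  · subst hl; simp [hcol, one_apply]
  by_cases hk : k = 4
  · subst hk; simp [hrow, one_apply, eq_comm]
  by_cases hkl : k = 0 ∧ l = 4
  · obtain ⟨rfl, rfl⟩ := hkl; simp
  rw [Matrix.add_apply, single_apply, if_neg (by tauto), add_zero, one_apply]
  split_ifs with hdiag
  · subst hdiag
    rw [← diag_eq_of_commute_single (hcomm (Ne.symm hl) (by decide) hl), hcol, if_pos rfl]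
  by_cases hl4 : l = 4
  · subst hl4
    have hk0 : k ≠ 0 := fun hk0 => hkl ⟨hk0, rfl⟩
    exact row_eq_zero_of_commute_single (hcomm (Ne.symm hk0) (by decide) hk0) (Ne.symm hk)
  · exact col_eq_zero_of_commute_single (hcomm hl4 hl4 (by decide)) hdiag

namespace G0

variable {R : Type} [CommRing R]

lemma apply_col_zero (g : G0 R) (i : Fin 5) :
    (g : Matrix (Fin 5) (Fin 5) R) i 0 = if i = 0 then 1 else 0 :=
  g.2.1 i

lemma apply_row_four (g : G0 R) (j : Fin 5) :
    (g : Matrix (Fin 5) (Fin 5) R) 4 j = if j = 4 then 1 else 0 :=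
  g.2.2 j

lemma coe_mul_single_zero_four (g : G0 R) (a : R) :
    (g : Matrix (Fin 5) (Fin 5) R) * single 0 4 a = single 0 4 a := by
  ext k l
  by_cases hl : l = 4
  · subst hl
    rw [mul_single_apply_same, apply_col_zero]
    by_cases hk : k = 0 <;> simp [hk, eq_comm]
  · simp [hl, Ne.symm hl]

lemma single_zero_four_mul_coe (g : G0 R) (a : R) :
    single 0 4 a * (g : Matrix (Fin 5) (Fin 5) R) = single 0 4 a := by
  ext k l
  by_cases hk : k = 0
  · subst hk
    rw [single_mul_apply_same, apply_row_four]
    by_cases hl : l = 4 <;> simp [hl, eq_comm]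
  · simp [hk, Ne.symm hk]

lemma e15_mem_center (a : R) : e15 R a ∈ Subgroup.center (G0 R) := by
  refine Subgroup.mem_center_iff.mpr fun g => Subtype.ext <| Subtype.ext ?_
  change (g : Matrix (Fin 5) (Fin 5) R) * (1 + single 0 4 a) =
    (1 + single 0 4 a) * (g : Matrix (Fin 5) (Fin 5) R)
  rw [mul_add, add_mul, mul_one, one_mul, coe_mul_single_zero_four, single_zero_four_mul_coe]

def transvection (i j : Fin 5) (hij : i ≠ j) (hi : i ≠ 4) (hj : j ≠ 0) : G0 R :=
  ⟨⟨Matrix.transvection i j 1, det_transvection_of_ne i j hij 1⟩,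
    fun k => by simp [Matrix.transvection, one_apply, hj],
    fun l => by simp [Matrix.transvection, one_apply, hi, eq_comm]⟩

lemma commute_single_of_mem_center {g : G0 R} (hg : g ∈ Subgroup.center (G0 R))
    {i j : Fin 5} (hij : i ≠ j) (hi : i ≠ 4) (hj : j ≠ 0) :
    Commute (single i j (1 : R)) (g : Matrix (Fin 5) (Fin 5) R) := by
  have hcomm : Commute (1 + single i j (1 : R)) g :=
    congrArg (fun x : G0 R => (x : Matrix (Fin 5) (Fin 5) R))
      (Subgroup.mem_center_iff.mp hg (transvection i j hij hi hj))
  simpa using hcomm.sub_left (Commute.one_left _)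

lemma eq_e15_of_mem_center {g : G0 R} (hg : g ∈ Subgroup.center (G0 R)) :
    g = e15 R ((g : Matrix (Fin 5) (Fin 5) R) 0 4) :=
  Subtype.ext <| Subtype.ext <| Matrix.eq_one_add_single_of_commute_single
    (apply_col_zero g) (apply_row_four g) (commute_single_of_mem_center hg)

lemma mem_center_iff {g : G0 R} : g ∈ Subgroup.center (G0 R) ↔ ∃ a, g = e15 R a :=
  ⟨fun hg => ⟨_, eq_e15_of_mem_center hg⟩, by rintro ⟨a, rfl⟩; exact e15_mem_center a⟩

lemma e15_add (a b : R) : e15 R (a + b) = e15 R a * e15 R b := by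
  refine Subtype.ext <| Subtype.ext ?_
  change 1 + single 0 4 (a + b) = (1 + single 0 4 a) * (1 + single 0 4 b)
  rw [single_add, add_mul, mul_add, mul_add, single_mul_single_of_ne a 0 4 0 (by decide) b]
  simp only [mul_one, one_mul, add_zero]
  abel

lemma e15_apply_zero_four (a : R) : (e15 R a : Matrix (Fin 5) (Fin 5) R) 0 4 = a := by
  change (1 + single 0 4 a) 0 4 = a
  simp

def e15Hom : Multiplicative R →* G0 R where
  toFun a := e15 R a.toAdd
  map_one' := by simpa using e15_add (R := R) 0 0
  map_mul' a b := e15_add a.toAdd b.toAdd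

lemma e15Hom_injective : Function.Injective (e15Hom (R := R)) := fun a b hab => by
  simpa [e15Hom, e15_apply_zero_four] using
    congrArg (fun g : G0 R => (g : Matrix (Fin 5) (Fin 5) R) 0 4) hab

lemma range_e15Hom : (e15Hom (R := R)).range = Subgroup.center (G0 R) := by
  ext g
  rw [mem_center_iff, MonoidHom.mem_range]
  exact ⟨fun ⟨a, ha⟩ => ⟨a.toAdd, ha.symm⟩, fun ⟨a, ha⟩ => ⟨.ofAdd a, ha.symm⟩⟩

end G0

theorem stmt_0_general (p : ℕ) :
    (∀ g : G0 (Lp p), g ∈ Subgroup.center (G0 (Lp p)) ↔ ∃ a : Lp p, g = e15 (Lp p) a) ∧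
    ∃ φ : Multiplicative (Lp p) ≃* Subgroup.center (G0 (Lp p)),
      ∀ a : Lp p, (φ (Multiplicative.ofAdd a) : G0 (Lp p)) = e15 (Lp p) a :=
  ⟨fun _ => G0.mem_center_iff,
    (MonoidHom.ofInjective G0.e15Hom_injective).trans (MulEquiv.subgroupCongr G0.range_e15Hom),
    fun _ => rfl⟩

/-- The center of `G' = G₀(𝔽_p[t,t⁻¹])` is exactly
`{ e₁₅(a) : a ∈ 𝔽_p[t,t⁻¹] }`, and `a ↦ e₁₅(a)` is an isomorphism from the additive
group of `𝔽_p[t,t⁻¹]` onto the center. -/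
theorem stmt_0 (p : ℕ) [Fact p.Prime] :
    (∀ g : G0 (Lp p), g ∈ Subgroup.center (G0 (Lp p)) ↔ ∃ a : Lp p, g = e15 (Lp p) a) ∧
    ∃ φ : Multiplicative (Lp p) ≃* Subgroup.center (G0 (Lp p)),
      ∀ a : Lp p, (φ (Multiplicative.ofAdd a) : G0 (Lp p)) = e15 (Lp p) a :=
  stmt_0_general p
end

section
/- Let C be a residually finite abelian group, regarded as a discrete group. Then the set of characters { φ ∈ Ĉ : there exists a finite-index subgroup N ≤ C with φ|_N trivial } is dense in the Pontryagin dual Ĉ. -/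
/-!
The characters of `C` trivial on a finite-index subgroup separate the points of `C` (residual
finiteness, plus the fact that characters of a finite abelian group separate points), so it
suffices that a closed subgroup `H` of the compact group `Ĉ` with trivial annihilator in `C` is all
of `Ĉ`. If `x ∉ H`, the functional `f ↦ ∫_H (f (x t) - f t) dt` (Haar measure on `H`) on
`C(Ĉ, ℂ)` kills every evaluation character `ψ ↦ ψ c`: those trivial on `H` are trivial at `x`, and
the others integrate to zero over `H`. By Stone–Weierstrass it then vanishes identically, yet it
takes the value `-1` on an Urysohn function equal to `1` on `H` and `0` on `x H`.
-/

open MeasureTheory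

theorem integral_monoidHom_circle_eq_zero {G : Type*} [Group G] [MeasurableSpace G]
    [MeasurableMul G] (μ : Measure G) [μ.IsMulLeftInvariant] (χ : G →* Circle) {s : G}
    (hs : χ s ≠ 1) : ∫ g, (χ g : ℂ) ∂μ = 0 := by
  have hinv : (χ s : ℂ) * ∫ g, (χ g : ℂ) ∂μ = ∫ g, (χ g : ℂ) ∂μ := by
    conv_rhs => rw [← integral_mul_left_eq_self _ s]
    rw [← integral_const_mul]
    simp only [map_mul, Circle.coe_mul]
  have : ((χ s : ℂ) - 1) * ∫ g, (χ g : ℂ) ∂μ = 0 := by rw [sub_mul, hinv, one_mul, sub_self]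
  exact (mul_eq_zero.mp this).resolve_left (sub_ne_zero.mpr fun h => hs (Circle.coe_eq_one.mp h))

namespace ContinuousMap

variable {X Y : Type*} [TopologicalSpace X] [MeasurableSpace X] [OpensMeasurableSpace X]
  [TopologicalSpace Y] [CompactSpace Y]

theorem integrable_comp (μ : Measure X) [IsFiniteMeasure μ] (f : C(Y, ℂ)) (p : C(X, Y)) :
    Integrable (fun t => f (p t)) μ :=
  .of_bound (f.comp p).continuous.aestronglyMeasurable ‖f‖
    (.of_forall fun t => f.norm_coe_le_norm (p t))

noncomputable def integralComp (μ : Measure X) [IsFiniteMeasure μ] (p : C(X, Y)) :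
    C(Y, ℂ) →L[ℂ] ℂ :=
  LinearMap.mkContinuous
    { toFun := fun f => ∫ t, f (p t) ∂μ
      map_add' := fun f g => integral_add (integrable_comp μ f p) (integrable_comp μ g p)
      map_smul' := fun c f => integral_smul c _ }
    (μ.real Set.univ) fun f => by
      rw [mul_comm]
      exact norm_integral_le_of_norm_le_const (.of_forall fun t => f.norm_coe_le_norm (p t))

theorem integralComp_apply (μ : Measure X) [IsFiniteMeasure μ] (p : C(X, Y)) (f : C(Y, ℂ)) :
    integralComp μ p f = ∫ t, f (p t) ∂μ := rfl

end ContinuousMap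

namespace ContinuousMonoidHom

variable {K : Type*} [Monoid K] [TopologicalSpace K]

noncomputable def toComplexContinuousMap : (K →ₜ* Circle) →* C(K, ℂ) where
  toFun γ := ⟨fun k => γ k, by fun_prop⟩
  map_one' := by ext; simp
  map_mul' γ δ := by ext; simp

@[simp]
theorem toComplexContinuousMap_apply (γ : K →ₜ* Circle) (k : K) :
    toComplexContinuousMap γ k = γ k := rfl

theorem star_toComplexContinuousMap (γ : K →ₜ* Circle) :
    star (toComplexContinuousMap γ) = toComplexContinuousMap γ⁻¹ := by
  ext k
  exact (Circle.coe_inv_eq_conj (γ k)).symm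

theorem dense_span_toComplexContinuousMap [CompactSpace K] (Γ : Subgroup (K →ₜ* Circle))
    (hΓ : ∀ x y, x ≠ y → ∃ γ ∈ Γ, γ x ≠ γ y) :
    Dense (Submodule.span ℂ (toComplexContinuousMap '' (Γ : Set (K →ₜ* Circle))) :
      Set C(K, ℂ)) := by
  set M := Γ.toSubmonoid.map toComplexContinuousMap
  have hstar : star (M : Set C(K, ℂ)) ⊆ M := by
    rintro _ ⟨γ, hγ, hγf⟩
    exact ⟨γ⁻¹, Γ.inv_mem hγ, by rw [← star_toComplexContinuousMap, hγf, star_star]⟩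
  have hspan : (StarAlgebra.adjoin ℂ (M : Set C(K, ℂ)) : Set C(K, ℂ)) =
      Submodule.span ℂ (toComplexContinuousMap '' (Γ : Set (K →ₜ* Circle))) := by
    have := congrArg ((↑) : Submodule ℂ C(K, ℂ) → Set C(K, ℂ))
      (StarAlgebra.adjoin_eq_span (R := ℂ) (M : Set C(K, ℂ)))
    rwa [Set.union_eq_self_of_subset_right hstar, Submonoid.closure_eq] at this
  have hsep : (StarAlgebra.adjoin ℂ (M : Set C(K, ℂ))).SeparatesPoints := by
    intro x y hxy
    obtain ⟨γ, hγ, hγxy⟩ := hΓ x y hxy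
    exact ⟨_, ⟨_, StarAlgebra.subset_adjoin ℂ _ ⟨γ, hγ, rfl⟩, rfl⟩, fun h => hγxy (Subtype.ext h)⟩
  rw [← hspan, dense_iff_closure_eq, ← StarSubalgebra.topologicalClosure_coe,
    ContinuousMap.starSubalgebra_topologicalClosure_eq_top_of_separatesPoints _ hsep]
  rfl

end ContinuousMonoidHom

section CompactGroup

open ContinuousMonoidHom Pointwise

variable {K : Type*} [Group K] [TopologicalSpace K] [IsTopologicalGroup K] [CompactSpace K]
  [T2Space K]

theorem exists_char_trivialOn_apply_ne_one (Γ : Subgroup (K →ₜ* Circle))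
    (hΓ : ∀ x y, x ≠ y → ∃ γ ∈ Γ, γ x ≠ γ y) {H : Subgroup K} (hH : IsClosed (H : Set K))
    {x : K} (hx : x ∉ H) : ∃ γ ∈ Γ, (∀ h ∈ H, γ h = 1) ∧ γ x ≠ 1 := by
  by_contra! hΓH
  let _ : MeasurableSpace H := borel H
  have : BorelSpace H := ⟨rfl⟩
  have : CompactSpace H := isCompact_iff_compactSpace.mp hH.isCompact
  let μ : Measure H := Measure.haarMeasure ⊤
  have : IsProbabilityMeasure μ := ⟨by
    simpa using Measure.haarMeasure_self (K₀ := (⊤ : TopologicalSpace.PositiveCompacts H))⟩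
  let incl : C(H, K) := ⟨Subtype.val, continuous_subtype_val⟩
  let L := ContinuousMap.integralComp μ ((ContinuousMap.mulLeft x).comp incl) -
    ContinuousMap.integralComp μ incl
  have hL : L = 0 := by
    refine ContinuousLinearMap.ext_on (dense_span_toComplexContinuousMap Γ hΓ) ?_
    rintro _ ⟨γ, hγ, rfl⟩
    have hLγ : L (toComplexContinuousMap γ) = ((γ x : ℂ) - 1) * ∫ t, (γ t : ℂ) ∂μ := by
      simp [L, incl, ContinuousMap.integralComp_apply, integral_const_mul, sub_mul]
    rw [hLγ, zero_apply]
    by_cases hγH : ∀ h ∈ H, γ h = 1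
    · rw [hΓH γ hγ hγH, Circle.coe_one, sub_self, zero_mul]
    · push Not at hγH
      obtain ⟨h, hh, hγh⟩ := hγH
      exact mul_eq_zero_of_right _ <|
        integral_monoidHom_circle_eq_zero μ ((γ : K →* Circle).comp H.subtype) (s := ⟨h, hh⟩) hγh
  have hdisj : Disjoint (x • (H : Set K)) H := by
    rw [Set.disjoint_left]
    rintro _ ⟨h, hh, rfl⟩ hxh
    exact hx (by simpa using H.mul_mem hxh (H.inv_mem hh))
  obtain ⟨f, hf0, hf1, -⟩ := exists_continuous_zero_one_of_isClosed (hH.leftCoset x) hH hdisj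
  have hLf : L ((ContinuousMap.mk ((↑) : ℝ → ℂ) Complex.continuous_ofReal).comp f) = -1 := by
    have hfx : ∀ t : H, f (x * t) = 0 := fun t => hf0 ⟨t, t.2, rfl⟩
    have hf : ∀ t : H, f t = 1 := fun t => hf1 t.2
    simp [L, incl, ContinuousMap.integralComp_apply, hfx, hf]
  simp [hL] at hLf

end CompactGroup

theorem CommGroup.exists_monoidHom_circle_apply_ne_one {A : Type*} [CommGroup A] [Finite A]
    {a : A} (ha : a ≠ 1) : ∃ χ : A →* Circle, χ a ≠ 1 := by
  obtain ⟨ξ, hξ⟩ := (AddChar.exists_apply_ne_zero (α := Additive A)).mpr (mt ofMul_eq_zero.mp ha)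
  refine ⟨(AddChar.circleEquivComplex.symm ξ).toMonoidHom, fun h => hξ ?_⟩
  exact congrArg ((↑) : Circle → ℂ) h

namespace PontryaginDual

variable (C : Type*) [CommGroup C] [TopologicalSpace C]

noncomputable def evalHom : C →* (PontryaginDual C →ₜ* Circle) where
  toFun c :=
    { toFun := fun ψ => ψ c
      map_one' := rfl
      map_mul' := fun _ _ => rfl
      continuous_toFun := continuous_eval_const (F := C →ₜ* Circle) c }
  map_one' := ContinuousMonoidHom.ext fun ψ => _root_.map_one ψ
  map_mul' c d := ContinuousMonoidHom.ext fun ψ => _root_.map_mul ψ c d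

@[simp]
theorem evalHom_apply (c : C) (ψ : PontryaginDual C) : evalHom C c ψ = ψ c := rfl

def finiteIndexChars : Subgroup (PontryaginDual C) where
  carrier := {φ | ∃ N : Subgroup C, N.FiniteIndex ∧ ∀ n ∈ N, φ n = 1}
  one_mem' := ⟨⊤, inferInstance, fun _ _ => rfl⟩
  mul_mem' := by
    rintro φ₁ φ₂ ⟨N₁, _, hN₁⟩ ⟨N₂, _, hN₂⟩
    refine ⟨N₁ ⊓ N₂, inferInstance, fun n hn => ?_⟩
    change φ₁ n * φ₂ n = 1
    rw [hN₁ n hn.1, hN₂ n hn.2, mul_one]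
  inv_mem' := by
    rintro φ ⟨N, hN, hφN⟩
    refine ⟨N, hN, fun n hn => ?_⟩
    change (φ n)⁻¹ = 1
    rw [hφN n hn, inv_one]

variable {C} [DiscreteTopology C]

theorem exists_mem_finiteIndexChars_apply_ne_one {Q : Type*} [Group Q] [Finite Q] (ψ : C →* Q)
    {c : C} (hc : ψ c ≠ 1) : ∃ σ ∈ finiteIndexChars C, σ c ≠ 1 := by
  have hc' : (c : C ⧸ ψ.ker) ≠ 1 := by rwa [Ne, QuotientGroup.eq_one_iff, MonoidHom.mem_ker]
  obtain ⟨χ, hχ⟩ := CommGroup.exists_monoidHom_circle_apply_ne_one hc'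
  refine ⟨⟨χ.comp (QuotientGroup.mk' ψ.ker), continuous_of_discreteTopology⟩,
    ⟨ψ.ker, inferInstance, fun n hn => ?_⟩, hχ⟩
  change χ (n : C ⧸ ψ.ker) = 1
  rw [(QuotientGroup.eq_one_iff n).mpr hn, _root_.map_one]

theorem dense_of_forall_exists_apply_ne_one (S : Subgroup (PontryaginDual C))
    (hS : ∀ c : C, c ≠ 1 → ∃ σ ∈ S, σ c ≠ 1) : Dense (S : Set (PontryaginDual C)) := by
  refine dense_iff_closure_eq.mpr (Set.eq_univ_of_forall fun φ => ?_)
  by_contra hφ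
  obtain ⟨_, ⟨c, rfl⟩, hcS, hφc⟩ := exists_char_trivialOn_apply_ne_one (evalHom C).range
    (fun ψ₁ ψ₂ h => by simpa using DFunLike.ne_iff.mp h)
    S.isClosed_topologicalClosure (x := φ) hφ
  obtain ⟨σ, hσ, hσc⟩ := hS c fun hc => hφc (by simp [hc])
  exact hσc (hcS σ (S.le_topologicalClosure hσ))

end PontryaginDual

/-- **Statement 11.** For a residually finite (discrete) abelian group `C`, the characters
that are trivial on some finite-index subgroup are dense in the Pontryagin dual of `C`. -/
theorem stmt_11 (C : Type*) [CommGroup C] [TopologicalSpace C] [DiscreteTopology C]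
    (hRF : ∀ c : C, c ≠ 1 →
      ∃ (Q : Type) (_ : Group Q) (_ : Finite Q) (ψ : C →* Q), ψ c ≠ 1) :
    Dense {φ : PontryaginDual C |
      ∃ N : Subgroup C, N.FiniteIndex ∧ ∀ n ∈ N, φ n = 1} := by
  refine PontryaginDual.dense_of_forall_exists_apply_ne_one (PontryaginDual.finiteIndexChars C) ?_
  intro c hc
  obtain ⟨Q, _, _, ψ, hψ⟩ := hRF c hc
  exact PontryaginDual.exists_mem_finiteIndexChars_apply_ne_one ψ hψ
end

section
/- Fix a prime p. For every integer k ≥ 1 and every ε > 0, there exist a positive integer q coprime to p and group homomorphisms β_l : (ℤ/qℤ, +) → 𝕋 for l = 1, …, p^k, such that for all integers j and l with 1 ≤ j ≤ p^k and 1 ≤ l ≤ p^k, one has |β_l(π_q(j/p^k)) − exp(2πi·j·l/p^k)| < ε, where π_q : ℤ[1/p] → ℤ/qℤ is the unique ring homomorphism (which exists since p is invertible modulo q). -/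
open Complex Real

/-!
Take `q = M * p ^ k + 1` with `M` large. Then `p ^ k * M = -1` in `ZMod q`, so
`π_q (j / p ^ k) = -j * M`, and the character `x ↦ exp (-2πi l x / q)` sends it to
`exp (2πi j l M / q)`. Since `M / q = 1 / p ^ k - 1 / (p ^ k * q)`, this is within
`2π j l / (p ^ k * q) < 2π / M` of `exp (2πi j l / p ^ k)`.
-/

theorem map_localizationAwayMk_mul_pow {R : Type*} [CommRing R] (x a : ℤ) (k : ℕ)
    (f : Localization.Away x →+* R) :
    f (Localization.mk a ⟨x ^ k, Submonoid.pow_mem _ (Submonoid.mem_powers _) k⟩) * (x : R) ^ k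
      = a := by
  simpa [← Localization.mk_eq_mk'_apply] using
    congrArg f (IsLocalization.mk'_spec (M := Submonoid.powers x) (Localization.Away x) a
      ⟨x ^ k, Submonoid.pow_mem _ (Submonoid.mem_powers _) k⟩)

theorem ZMod.natCast_mul_natCast_eq_neg_one (n M : ℕ) : (n : ZMod (M * n + 1)) * M = -1 := by
  have h := ZMod.natCast_self (M * n + 1)
  push_cast at h
  linear_combination h

theorem Complex.norm_exp_mul_I_sub_exp_mul_I_le (x y : ℝ) :
    ‖exp (x * I) - exp (y * I)‖ ≤ |x - y| := by
  have h : exp (x * I) - exp (y * I) = exp (y * I) * (exp (I * ↑(x - y)) - 1) := by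
    rw [mul_sub, mul_one, ← exp_add]
    push_cast
    ring_nf
  rw [h, norm_mul, norm_exp_ofReal_mul_I, one_mul, ← Real.norm_eq_abs]
  exact Real.norm_exp_I_mul_ofReal_sub_one_le

theorem norm_exp_two_pi_I_mul_div_sub_lt {a n M : ℕ} (hn : 0 < n) (ha : a ≤ n ^ 2)
    (hM : 0 < M) :
    ‖exp (2 * π * I * (a * M : ℕ) / (M * n + 1 : ℕ)) - exp (2 * π * I * a / n)‖
      < 2 * π / M := by
  have hnR : (0 : ℝ) < n := by exact_mod_cast hn
  have hMR : (0 : ℝ) < M := by exact_mod_cast hM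
  have haR : (a : ℝ) ≤ n ^ 2 := by exact_mod_cast ha
  have hx : 2 * π * I * (a * M : ℕ) / (M * n + 1 : ℕ)
      = ↑(2 * π * a * M / (M * n + 1)) * I := by
    push_cast; ring
  have hy : 2 * π * I * a / n = ↑(2 * π * a / n) * I := by
    push_cast; ring
  have hdiff : 2 * π * a * M / (M * n + 1) - 2 * π * a / n
      = -(2 * π * a / (n * (M * n + 1))) := by
    field_simp; ring
  rw [hx, hy]
  refine (norm_exp_mul_I_sub_exp_mul_I_le _ _).trans_lt ?_
  rw [hdiff, abs_neg, abs_of_nonneg (by positivity), div_lt_div_iff₀ (by positivity) hMR]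
  have key : (a : ℝ) * M < n * (M * n + 1) := by nlinarith
  nlinarith [pi_pos]

theorem stmt_12_general (p : ℕ) (k : ℕ) (hk : 1 ≤ k) (ε : ℝ) (hε : 0 < ε) :
    ∃ q : ℕ, 0 < q ∧ Nat.Coprime q p ∧
      ∃ (πq : Localization.Away (p : ℤ) →+* ZMod q)
        (β : ℕ → (Multiplicative (ZMod q) →* Circle)),
        ∀ j l : ℕ, 1 ≤ j → j ≤ p ^ k → 1 ≤ l → l ≤ p ^ k →
          ‖(((β l) (Multiplicative.ofAdd
                (πq (Localization.mk (j : ℤ)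
                  ⟨(p : ℤ) ^ k, Submonoid.pow_mem _ (Submonoid.mem_powers _) k⟩))) : ℂ)
              - Complex.exp (2 * Real.pi * Complex.I * (j : ℂ) * (l : ℂ) / (p : ℂ) ^ k))‖
            < ε := by
  obtain ⟨M, hM⟩ := exists_nat_gt (2 * π / ε)
  have hM0 : 0 < M := by exact_mod_cast (show (0 : ℝ) < 2 * π / ε by positivity).trans hM
  have hqp : Nat.Coprime (M * p ^ k + 1) p :=
    ((Nat.coprime_mul_right_add_left 1 (p ^ k) M).2 (Nat.coprime_one_left _)).coprime_dvd_right
      (dvd_pow_self p (by omega))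
  have hpM : (p : ZMod (M * p ^ k + 1)) ^ k * M = -1 := by
    exact_mod_cast ZMod.natCast_mul_natCast_eq_neg_one (p ^ k) M
  have hpu : IsUnit (Int.castRingHom (ZMod (M * p ^ k + 1)) p) := by
    simpa using (ZMod.unitOfCoprime p hqp.symm).isUnit
  set πq := Localization.awayLift (Int.castRingHom (ZMod (M * p ^ k + 1))) p hpu
  refine ⟨M * p ^ k + 1, by omega, hqp, πq,
    fun l => (ZMod.toCircle.mulShift (-(l : ZMod (M * p ^ k + 1)))).toMonoidHom,
    fun j l hj1 hjn hl1 hln => ?_⟩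
  set jp : Localization.Away (p : ℤ) :=
    Localization.mk (j : ℤ) ⟨(p : ℤ) ^ k, Submonoid.pow_mem _ (Submonoid.mem_powers _) k⟩
  have hπ : πq jp = -(j * M) := by
    have h := map_localizationAwayMk_mul_pow p j k πq
    push_cast at h
    linear_combination (-M : ZMod (M * p ^ k + 1)) * h + πq jp * hpM
  have hβ : -(l : ZMod (M * p ^ k + 1)) * -((j : ZMod (M * p ^ k + 1)) * M)
      = ((j * l * M : ℕ) : ZMod (M * p ^ k + 1)) := by
    push_cast; ring
  simp only [hπ, AddChar.toMonoidHom_apply, toAdd_ofAdd, AddChar.mulShift_apply, hβ,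
    ZMod.toCircle_natCast]
  calc _ < 2 * π / M := by
        convert norm_exp_two_pi_I_mul_div_sub_lt (a := j * l) (n := p ^ k) (by omega)
          (by nlinarith) hM0 using 4
        push_cast
        ring
    _ < ε := (div_lt_comm₀ (by positivity) hε).2 hM

/-- **Statement 12.** For every `k ≥ 1` and `ε > 0` there are `q` coprime to `p` and
characters `β_l : ℤ/qℤ → 𝕋`, `1 ≤ l ≤ p^k`, with
`|β_l(π_q(j/p^k)) − exp(2πi·j·l/p^k)| < ε` for all `1 ≤ j ≤ p^k`. -/
theorem stmt_12 (p : ℕ) (hp : p.Prime) (k : ℕ) (hk : 1 ≤ k) (ε : ℝ) (hε : 0 < ε) :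
    ∃ q : ℕ, 0 < q ∧ Nat.Coprime q p ∧
      ∃ (πq : Localization.Away (p : ℤ) →+* ZMod q)
        (β : ℕ → (Multiplicative (ZMod q) →* Circle)),
        ∀ j l : ℕ, 1 ≤ j → j ≤ p ^ k → 1 ≤ l → l ≤ p ^ k →
          ‖(((β l) (Multiplicative.ofAdd
                (πq (Localization.mk (j : ℤ)
                  ⟨(p : ℤ) ^ k, Submonoid.pow_mem _ (Submonoid.mem_powers _) k⟩))) : ℂ)
              - Complex.exp (2 * Real.pi * Complex.I * (j : ℂ) * (l : ℂ) / (p : ℂ) ^ k))‖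
            < ε :=
  stmt_12_general p k hk ε hε
end
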